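/- In the 1D example with D = [−1−ε, 1+ε] and Robin parameter β > 0, the competitor with interface at 0 has energy J(ε, β) = 2(1+ε)β²/(2+β+εβ)² + β(2/(2+β+εβ))² + 2 + 2ε, and at ε = 0 this equals 2(β² + 2β)/(β² + 4β + 4) + 2, which is strictly less than 4 for every β > 0. Consequently, for every β > 0 there exists ε_0 > 0 such that J(ε, β) < 4 for all ε ∈ (0, ε_0). -/
import Mathlib


open Set

/-- The energy of the optimal piecewise-linear competitor with interface at `0` in the
one-dimensional Robin two-phase example on `D = [-1-ε, 1+ε]`. -/
noncomputable def robinEnergy (ε β : ℝ) : ℝ :=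
  2 * (1 + ε) * β ^ 2 / (2 + β + ε * β) ^ 2 + β * (2 / (2 + β + ε * β)) ^ 2 + 2 + 2 * ε

/-- In the 1D example, the competitor with interface at `0` has energy
`J(ε,β) = 2(1+ε)β²/(2+β+εβ)² + β(2/(2+β+εβ))² + 2 + 2ε`; at `ε = 0` this equals
`2(β²+2β)/(β²+4β+4) + 2 < 4`, and hence for every `β > 0` there is `ε₀ > 0` with
`J(ε,β) < 4` for all `ε ∈ (0, ε₀)`. -/
theorem robin_interface_beats_one_phase :
    ∀ β : ℝ, 0 < β →
      (robinEnergy 0 β = 2 * (β ^ 2 + 2 * β) / (β ^ 2 + 4 * β + 4) + 2 ∧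
        robinEnergy 0 β < 4) ∧
      ∃ ε₀ : ℝ, 0 < ε₀ ∧ ∀ ε ∈ Ioo (0 : ℝ) ε₀, robinEnergy ε β < 4 := by
  intro β hβ
  have hden : (2 + β + (0:ℝ) * β) ≠ 0 := by nlinarith
  have hden2 : (β ^ 2 + 4 * β + 4 : ℝ) ≠ 0 := by nlinarith
  have heq : robinEnergy 0 β = 2 * (β ^ 2 + 2 * β) / (β ^ 2 + 4 * β + 4) + 2 := by
    unfold robinEnergy
    field_simp
    ring
  have hlt : robinEnergy 0 β < 4 := by
    rw [heq]
    have h1 : 2 * (β ^ 2 + 2 * β) / (β ^ 2 + 4 * β + 4) < 2 := by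
      rw [div_lt_iff₀ (by nlinarith)]
      nlinarith
    linarith
  refine ⟨⟨heq, hlt⟩, ?_⟩
  have hDpos : (0:ℝ) < β ^ 2 + (2 + β) ^ 2 := by nlinarith
  refine ⟨2 * (β + 2) / (β ^ 2 + (2 + β) ^ 2), by positivity, ?_⟩
  intro ε hε
  have hε0 : 0 < ε := hε.1
  have h1 : ε * (β ^ 2 + (2 + β) ^ 2) < 2 * (β + 2) := by
    have := hε.2
    rw [lt_div_iff₀ hDpos] at this
    linarith
  have hε1 : ε < 1 := by nlinarith
  have hd : (0:ℝ) < 2 + β + ε * β := by nlinarith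
  have hd' : (2 + β : ℝ) ≤ 2 + β + ε * β := by nlinarith
  have key : robinEnergy ε β
      = (2 * (1 + ε) * β ^ 2 + 4 * β) / (2 + β + ε * β) ^ 2 + 2 + 2 * ε := by
    unfold robinEnergy
    field_simp
    ring
  rw [key]
  have hnum : (2 * (1 + ε) * β ^ 2 + 4 * β) < (2 - 2 * ε) * (2 + β + ε * β) ^ 2 := by
    nlinarith [mul_nonneg (mul_nonneg (mul_nonneg hε0.le hβ.le) (by nlinarith : (0:ℝ) ≤ 2 + β)) (by linarith : (0:ℝ) ≤ 1 - ε),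
      mul_nonneg (mul_nonneg (sq_nonneg ε) (sq_nonneg β)) (by linarith : (0:ℝ) ≤ 1 - ε)]
  have hdiv : (2 * (1 + ε) * β ^ 2 + 4 * β) / (2 + β + ε * β) ^ 2 < 2 - 2 * ε := by
    rw [div_lt_iff₀ (by positivity)]
    linarith
  linarith
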